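/- Let W = C D_c^{−1/2} and Ŵ = Ĉ D̂^{−1/2} for clustering matrices C, Ĉ ∈ {0,1}^{L×M} with cluster sizes L_m, L̂_m > 0. Then ‖Ŵ − W‖²_F ≤ 2‖I_M − D̂^{1/2} D_c^{−1/2}‖²_F + 2‖Ĉ − C‖²_F / min_m L_m, using that ‖Ĉ D̂^{−1/2}‖ = 1 and ‖D_c^{−1/2}‖² = 1/min_m L_m. -/

import Mathlib

open Matrix

theorem normalized_clustering_matrix_diff_bound (L M : ℕ)
    (c ch : Fin L → Fin M)
    (hsurj : ∀ m, ∃ l, c l = m) (hsurj' : ∀ m, ∃ l, ch l = m) :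
    let Lm : Fin M → ℕ := fun m => Fintype.card {l : Fin L // c l = m}
    let Lhm : Fin M → ℕ := fun m => Fintype.card {l : Fin L // ch l = m}
    let C : Matrix (Fin L) (Fin M) ℝ := fun l m => if c l = m then 1 else 0
    let Ch : Matrix (Fin L) (Fin M) ℝ := fun l m => if ch l = m then 1 else 0
    let W : Matrix (Fin L) (Fin M) ℝ := fun l m => C l m * (Real.sqrt (Lm m))⁻¹
    let Wh : Matrix (Fin L) (Fin M) ℝ := fun l m => Ch l m * (Real.sqrt (Lhm m))⁻¹
    let E : Matrix (Fin M) (Fin M) ℝ :=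
      (1 : Matrix (Fin M) (Fin M) ℝ) -
        Matrix.diagonal (fun m => Real.sqrt (Lhm m) / Real.sqrt (Lm m))
    ∑ l, ∑ m, (Wh l m - W l m) ^ 2
      ≤ 2 * (∑ i, ∑ j, (E i j) ^ 2) +
        2 * (∑ l, ∑ m, (Ch l m - C l m) ^ 2) / (⨅ m, (Lm m : ℝ)) := by
  intro Lm Lhm C Ch W Wh E
  rcases Nat.eq_zero_or_pos M with hM | hM
  · subst hM
    simp
  have hLmpos : ∀ m, (1:ℝ) ≤ (Lm m : ℝ) := by
    intro m
    obtain ⟨l, hl⟩ := hsurj m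
    have : 0 < Lm m := Fintype.card_pos_iff.mpr ⟨⟨l, hl⟩⟩
    exact_mod_cast this
  have hLhpos : ∀ m, (0:ℝ) < (Lhm m : ℝ) := by
    intro m
    obtain ⟨l, hl⟩ := hsurj' m
    have : 0 < Lhm m := Fintype.card_pos_iff.mpr ⟨⟨l, hl⟩⟩
    exact_mod_cast this
  haveI : Nonempty (Fin M) := ⟨⟨0, hM⟩⟩
  have hinf_pos : 0 < ⨅ m, (Lm m : ℝ) :=
    lt_of_lt_of_le one_pos (le_ciInf hLmpos)
  have hinf_le : ∀ m, (⨅ m', (Lm m' : ℝ)) ≤ (Lm m : ℝ) := fun m =>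
    ciInf_le (Finite.bddBelow_range _) m
  set s : Fin M → ℝ := fun m => 1 - Real.sqrt (Lhm m) / Real.sqrt (Lm m) with hs
  have hcountCh : ∀ m, ∑ l, (Ch l m)^2 = (Lhm m : ℝ) := by
    intro m
    have : ∀ l, (Ch l m)^2 = if ch l = m then (1:ℝ) else 0 := by
      intro l; simp only [Ch]; split_ifs <;> norm_num
    simp [this, Finset.sum_boole, Lhm, Fintype.card_subtype]
  have key : ∀ l m, (Wh l m - W l m)^2 ≤
      2*((Ch l m)^2 * ((Lhm m:ℝ))⁻¹ * (s m)^2) + 2*((Ch l m - C l m)^2 * ((Lm m:ℝ))⁻¹) := by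
    intro l m
    have h1 : 0 < Real.sqrt (Lhm m) := Real.sqrt_pos.mpr (hLhpos m)
    have h2 : 0 < Real.sqrt (Lm m) :=
      Real.sqrt_pos.mpr (lt_of_lt_of_le one_pos (hLmpos m))
    have hsq1 : Real.sqrt (Lhm m) ^ 2 = (Lhm m : ℝ) := Real.sq_sqrt (hLhpos m).le
    have hsq2 : Real.sqrt (Lm m) ^ 2 = (Lm m : ℝ) :=
      Real.sq_sqrt (le_trans zero_le_one (hLmpos m))
    have hid : Wh l m - W l m =
        Ch l m * (Real.sqrt (Lhm m))⁻¹ * s m + (Ch l m - C l m) * (Real.sqrt (Lm m))⁻¹ := by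
      simp only [Wh, W, hs]
      field_simp
      ring
    have ea : (Ch l m * (Real.sqrt (Lhm m))⁻¹ * s m)^2
        = (Ch l m)^2 * ((Lhm m:ℝ))⁻¹ * (s m)^2 := by
      rw [mul_pow, mul_pow, inv_pow, hsq1]
    have eb : ((Ch l m - C l m) * (Real.sqrt (Lm m))⁻¹)^2
        = (Ch l m - C l m)^2 * ((Lm m:ℝ))⁻¹ := by
      rw [mul_pow, inv_pow, hsq2]
    rw [hid, ← ea, ← eb]
    nlinarith [sq_nonneg (Ch l m * (Real.sqrt (Lhm m))⁻¹ * s m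
      - (Ch l m - C l m) * (Real.sqrt (Lm m))⁻¹)]
  have hE : ∀ i j, E i j = if i = j then s i else 0 := by
    intro i j
    simp only [E, Matrix.sub_apply, Matrix.one_apply, Matrix.diagonal_apply]
    split_ifs <;> simp [hs]
  have hEsum : ∑ i, ∑ j, (E i j)^2 = ∑ m, (s m)^2 := by
    refine Finset.sum_congr rfl fun i _ => ?_
    have : ∀ j, (E i j)^2 = if i = j then (s i)^2 else 0 := by
      intro j; rw [hE]; split_ifs <;> norm_num
    simp [this]
  calc ∑ l, ∑ m, (Wh l m - W l m) ^ 2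
      ≤ ∑ l, ∑ m, (2*((Ch l m)^2 * ((Lhm m:ℝ))⁻¹ * (s m)^2)
          + 2*((Ch l m - C l m)^2 * ((Lm m:ℝ))⁻¹)) := by
        refine Finset.sum_le_sum fun l _ => Finset.sum_le_sum fun m _ => key l m
    _ = (∑ l, ∑ m, 2*((Ch l m)^2 * ((Lhm m:ℝ))⁻¹ * (s m)^2))
          + ∑ l, ∑ m, 2*((Ch l m - C l m)^2 * ((Lm m:ℝ))⁻¹) := by
        rw [← Finset.sum_add_distrib]
        refine Finset.sum_congr rfl fun l _ => ?_
        rw [← Finset.sum_add_distrib]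
    _ ≤ 2 * (∑ i, ∑ j, (E i j) ^ 2) +
        2 * (∑ l, ∑ m, (Ch l m - C l m) ^ 2) / (⨅ m, (Lm m : ℝ)) := by
        have hfirst : (∑ l, ∑ m, 2*((Ch l m)^2 * ((Lhm m:ℝ))⁻¹ * (s m)^2))
            = 2 * (∑ i, ∑ j, (E i j) ^ 2) := by
          rw [hEsum, Finset.sum_comm, Finset.mul_sum]
          refine Finset.sum_congr rfl fun m _ => ?_
          have e1 : (∑ l, 2*((Ch l m)^2 * ((Lhm m:ℝ))⁻¹ * (s m)^2))
              = (∑ l, (Ch l m)^2) * (2 * ((Lhm m:ℝ))⁻¹ * (s m)^2) := by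
            rw [Finset.sum_mul]
            exact Finset.sum_congr rfl fun l _ => by ring
          rw [e1, hcountCh m]
          have hne : (Lhm m:ℝ) ≠ 0 := ne_of_gt (hLhpos m)
          calc (Lhm m:ℝ) * (2 * ((Lhm m:ℝ))⁻¹ * (s m)^2)
              = ((Lhm m:ℝ) * ((Lhm m:ℝ))⁻¹) * (2 * (s m)^2) := by ring
            _ = 2 * (s m)^2 := by rw [mul_inv_cancel₀ hne, one_mul]
        have hsecond : (∑ l, ∑ m, 2*((Ch l m - C l m)^2 * ((Lm m:ℝ))⁻¹))
            ≤ 2 * (∑ l, ∑ m, (Ch l m - C l m) ^ 2) / (⨅ m, (Lm m : ℝ)) := by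
          have e2 : 2 * (∑ l, ∑ m, (Ch l m - C l m) ^ 2) / (⨅ m, (Lm m : ℝ))
              = ∑ l, ∑ m, 2 * ((Ch l m - C l m) ^ 2 * (⨅ m, (Lm m : ℝ))⁻¹) := by
            rw [div_eq_mul_inv, mul_assoc, Finset.sum_mul, Finset.mul_sum]
            refine Finset.sum_congr rfl fun l _ => ?_
            rw [Finset.sum_mul, Finset.mul_sum]
          rw [e2]
          refine Finset.sum_le_sum fun l _ => Finset.sum_le_sum fun m _ => ?_
          have h := inv_anti₀ hinf_pos (hinf_le m)
          nlinarith [sq_nonneg (Ch l m - C l m)]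
        rw [hfirst]
        exact add_le_add_right hsecond _
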